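/- Let E = [[0,1],[0,0]], H = [[1,0],[0,−1]], F = [[0,0],[1,0]] be the standard basis of the Lie algebra sl(2,ℝ) of traceless 2×2 real matrices, and let Φ be the unique linear map from sl(2,ℝ) to vector fields on ℝ⁵ with Φ(E) = S₁ = x ∂/∂y + ∂/∂y₁ + (1/2)x² ∂/∂z, Φ(H) = S₂ = x ∂/∂x − y ∂/∂y − 2y₁ ∂/∂y₁ − 3y₂ ∂/∂y₂, Φ(F) = S₃ = y ∂/∂x − y₁² ∂/∂y₁ − 3y₁y₂ ∂/∂y₂ + (1/2)y² ∂/∂z. Then Φ is injective and bracket-preserving: for all A, B ∈ sl(2,ℝ), the Lie bracket of vector fields [Φ(A), Φ(B)] equals Φ([A,B]). -/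
import Mathlib


/-- Lie bracket of vector fields on ℝ⁵, `[V,W](p) = DW(p)(V(p)) − DV(p)(W(p))`. -/
noncomputable def lieBracket (V W : (Fin 5 → ℝ) → (Fin 5 → ℝ)) :
    (Fin 5 → ℝ) → (Fin 5 → ℝ) :=
  fun p => fderiv ℝ W p (V p) - fderiv ℝ V p (W p)

/-- `S₁ = x ∂/∂y + ∂/∂y₁ + (1/2)x² ∂/∂z`, coordinates
`(x, y, y₁, y₂, z) = (p 0, p 1, p 2, p 3, p 4)`. -/
noncomputable def S₁ : (Fin 5 → ℝ) → (Fin 5 → ℝ) :=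
  fun p => ![0, p 0, 1, 0, (1 / 2) * (p 0) ^ 2]

/-- `S₂ = x ∂/∂x − y ∂/∂y − 2y₁ ∂/∂y₁ − 3y₂ ∂/∂y₂`. -/
noncomputable def S₂ : (Fin 5 → ℝ) → (Fin 5 → ℝ) :=
  fun p => ![p 0, -p 1, -2 * p 2, -3 * p 3, 0]

/-- `S₃ = y ∂/∂x − y₁² ∂/∂y₁ − 3y₁y₂ ∂/∂y₂ + (1/2)y² ∂/∂z`. -/
noncomputable def S₃ : (Fin 5 → ℝ) → (Fin 5 → ℝ) :=
  fun p => ![p 1, 0, -(p 2) ^ 2, -3 * p 2 * p 3, (1 / 2) * (p 1) ^ 2]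

/-- `S₄ = ∂/∂x`. -/
noncomputable def S₄ : (Fin 5 → ℝ) → (Fin 5 → ℝ) := fun _ => ![1, 0, 0, 0, 0]

/-- `S₅ = ∂/∂y + x ∂/∂z`. -/
noncomputable def S₅ : (Fin 5 → ℝ) → (Fin 5 → ℝ) := fun p => ![0, 1, 0, 0, p 0]

/-- `S₆ = ∂/∂z`. -/
noncomputable def S₆ : (Fin 5 → ℝ) → (Fin 5 → ℝ) := fun _ => ![0, 0, 0, 0, 1]

open LieAlgebra.SpecialLinear in
/-- `E = [[0,1],[0,0]]` as an element of `sl(2,ℝ)`. -/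
noncomputable def Esl : sl (Fin 2) ℝ :=
  ⟨!![0, 1; 0, 0], show Matrix.traceLinearMap (Fin 2) ℝ ℝ _ = 0 by
    simp [Matrix.trace_fin_two]⟩

open LieAlgebra.SpecialLinear in
/-- `H = [[1,0],[0,−1]]` as an element of `sl(2,ℝ)`. -/
noncomputable def Hsl : sl (Fin 2) ℝ :=
  ⟨!![1, 0; 0, -1], show Matrix.traceLinearMap (Fin 2) ℝ ℝ _ = 0 by
    simp [Matrix.trace_fin_two]⟩

open LieAlgebra.SpecialLinear in
/-- `F = [[0,0],[1,0]]` as an element of `sl(2,ℝ)`. -/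
noncomputable def Fsl : sl (Fin 2) ℝ :=
  ⟨!![0, 0; 1, 0], show Matrix.traceLinearMap (Fin 2) ℝ ℝ _ = 0 by
    simp [Matrix.trace_fin_two]⟩


noncomputable def pr (i : Fin 5) : (Fin 5 → ℝ) →L[ℝ] ℝ :=
  ContinuousLinearMap.proj i

noncomputable def Dm (a b c : ℝ) (p : Fin 5 → ℝ) : (Fin 5 → ℝ) →L[ℝ] (Fin 5 → ℝ) :=
  ContinuousLinearMap.pi ![
    b • pr 0 + c • pr 1,
    a • pr 0 - b • pr 1,
    (-2*b - 2*c*p 2) • pr 2,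
    (-3*c*p 3) • pr 2 + (-3*b - 3*c*p 2) • pr 3,
    (a*p 0) • pr 0 + (c*p 1) • pr 1 ]

lemma hasF (a b c : ℝ) (p : Fin 5 → ℝ) :
    HasFDerivAt (fun q => a • S₁ q + b • S₂ q + c • S₃ q) (Dm a b c p) p := by
  rw [hasFDerivAt_pi']
  intro i
  have h0 := hasFDerivAt_apply (𝕜 := ℝ) (0 : Fin 5) p
  have h1 := hasFDerivAt_apply (𝕜 := ℝ) (1 : Fin 5) p
  have h2 := hasFDerivAt_apply (𝕜 := ℝ) (2 : Fin 5) p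
  have h3 := hasFDerivAt_apply (𝕜 := ℝ) (3 : Fin 5) p
  match i with
  | 0 =>
    refine HasFDerivAt.congr_of_eventuallyEq (f := fun q => b * q 0 + c * q 1)
      ?_ (Filter.Eventually.of_forall fun q => by
        simp [S₁, S₂, S₃]; try ring)
    convert (h0.const_mul b).add (h1.const_mul c) using 1
    all_goals { ext v; simp [Dm, pr]; try ring }
  | 1 =>
    refine HasFDerivAt.congr_of_eventuallyEq (f := fun q => a * q 0 - b * q 1)
      ?_ (Filter.Eventually.of_forall fun q => by
        simp [S₁, S₂, S₃]; try ring)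
    convert (h0.const_mul a).sub (h1.const_mul b) using 1
    all_goals { ext v; simp [Dm, pr]; try ring }
  | 2 =>
    refine HasFDerivAt.congr_of_eventuallyEq
      (f := fun q => a + (-2*b) * q 2 + (-c) * (q 2 * q 2))
      ?_ (Filter.Eventually.of_forall fun q => by
        simp [S₁, S₂, S₃]; try ring)
    convert ((h2.const_mul (-2*b)).const_add a).add ((h2.mul h2).const_mul (-c)) using 1
    all_goals { ext v; simp [Dm, pr]; try ring }
  | 3 =>
    refine HasFDerivAt.congr_of_eventuallyEq
      (f := fun q => (-3*b) * q 3 + (-3*c) * (q 2 * q 3))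
      ?_ (Filter.Eventually.of_forall fun q => by
        simp [S₁, S₂, S₃]; try ring)
    convert ((h3.const_mul (-3*b))).add ((h2.mul h3).const_mul (-3*c)) using 1
    all_goals { ext v; simp [Dm, pr]; try ring }
  | 4 =>
    refine HasFDerivAt.congr_of_eventuallyEq
      (f := fun q => (a/2) * (q 0 * q 0) + (c/2) * (q 1 * q 1))
      ?_ (Filter.Eventually.of_forall fun q => by
        simp [S₁, S₂, S₃]; try ring)
    convert ((h0.mul h0).const_mul (a/2)).add ((h1.mul h1).const_mul (c/2)) using 1
    all_goals { ext v; simp [Dm, pr]; try ring }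

open LieAlgebra.SpecialLinear in
lemma decomp (A : sl (Fin 2) ℝ) :
    A = A.1 0 1 • Esl + A.1 0 0 • Hsl + A.1 1 0 • Fsl := by
  have htr : Matrix.trace A.1 = 0 := A.2
  rw [Matrix.trace_fin_two] at htr
  have hcoe : ∀ (c : ℝ) (X : sl (Fin 2) ℝ),
      ((c • X : sl (Fin 2) ℝ) : Matrix (Fin 2) (Fin 2) ℝ) = c • X.1 := fun _ _ => rfl
  apply Subtype.ext
  ext i j
  fin_cases i <;> fin_cases j <;>
    simp [Esl, Hsl, Fsl, hcoe, Matrix.smul_apply, smul_eq_mul] <;> linarith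


open LieAlgebra.SpecialLinear in
/-- Any linear map `Φ` from `sl(2,ℝ)` to vector fields on ℝ⁵ sending the standard basis
`E, H, F` to `S₁, S₂, S₃` is injective and sends the matrix commutator to the Lie bracket
of vector fields. -/
theorem sl2_embeds_into_symmetries
    (Φ : sl (Fin 2) ℝ →ₗ[ℝ] ((Fin 5 → ℝ) → (Fin 5 → ℝ)))
    (hE : Φ Esl = S₁) (hH : Φ Hsl = S₂) (hF : Φ Fsl = S₃) :
    Function.Injective Φ ∧
      ∀ A B : sl (Fin 2) ℝ, lieBracket (Φ A) (Φ B) = Φ ⁅A, B⁆ := by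
  have key : ∀ A : sl (Fin 2) ℝ,
      Φ A = fun q => A.1 0 1 • S₁ q + A.1 0 0 • S₂ q + A.1 1 0 • S₃ q := by
    intro A
    conv_lhs => rw [decomp A]
    rw [map_add, map_add, map_smul, map_smul, map_smul, hE, hH, hF]
    rfl
  constructor
  · rw [injective_iff_map_eq_zero]
    intro A h
    rw [key A] at h
    have ha : A.1 0 1 = 0 := by
      have := congrFun h 0
      have h2 := congrFun this 2
      simpa [S₁, S₂, S₃] using h2
    have hb : A.1 0 0 = 0 := by
      have := congrFun h ![1, 0, 0, 0, 0]
      have h2 := congrFun this 0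
      simpa [S₁, S₂, S₃] using h2
    have hc : A.1 1 0 = 0 := by
      have := congrFun h ![0, 1, 0, 0, 0]
      have h2 := congrFun this 0
      simpa [S₁, S₂, S₃] using h2
    rw [decomp A, ha, hb, hc]
    simp
  · intro A B
    have htrA : A.1 1 1 = -(A.1 0 0) := by
      have : Matrix.trace A.1 = 0 := A.2
      rw [Matrix.trace_fin_two] at this; linarith
    have htrB : B.1 1 1 = -(B.1 0 0) := by
      have : Matrix.trace B.1 = 0 := B.2
      rw [Matrix.trace_fin_two] at this; linarith
    funext p
    rw [lieBracket, key A, key B, key ⁅A, B⁆,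
      (hasF (A.1 0 1) (A.1 0 0) (A.1 1 0) p).fderiv,
      (hasF (B.1 0 1) (B.1 0 0) (B.1 1 0) p).fderiv]
    have hbr : ∀ i j, (⁅A, B⁆ : sl (Fin 2) ℝ).1 i j
        = A.1 i 0 * B.1 0 j + A.1 i 1 * B.1 1 j - (B.1 i 0 * A.1 0 j + B.1 i 1 * A.1 1 j) := by
      intro i j
      rw [sl_bracket]
      simp [Matrix.mul_apply, Fin.sum_univ_two]
    funext i
    match i with
    | 0 =>
      simp only [Pi.sub_apply, Pi.add_apply, Pi.smul_apply, Dm, pr,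
        ContinuousLinearMap.pi_apply, ContinuousLinearMap.add_apply,
        ContinuousLinearMap.sub_apply, ContinuousLinearMap.smul_apply,
        ContinuousLinearMap.proj_apply, smul_eq_mul, S₁, S₂, S₃,
        Matrix.cons_val_zero, Matrix.cons_val_one, Matrix.head_cons,
        Matrix.cons_val_two, Matrix.tail_cons, Matrix.cons_val_three,
        Matrix.cons_val_four, hbr, htrA, htrB]
      ring
    | 1 =>
      simp only [Pi.sub_apply, Pi.add_apply, Pi.smul_apply, Dm, pr,
        ContinuousLinearMap.pi_apply, ContinuousLinearMap.add_apply,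
        ContinuousLinearMap.sub_apply, ContinuousLinearMap.smul_apply,
        ContinuousLinearMap.proj_apply, smul_eq_mul, S₁, S₂, S₃,
        Matrix.cons_val_zero, Matrix.cons_val_one, Matrix.head_cons,
        Matrix.cons_val_two, Matrix.tail_cons, Matrix.cons_val_three,
        Matrix.cons_val_four, hbr, htrA, htrB]
      ring
    | 2 =>
      simp only [Pi.sub_apply, Pi.add_apply, Pi.smul_apply, Dm, pr,
        ContinuousLinearMap.pi_apply, ContinuousLinearMap.add_apply,
        ContinuousLinearMap.sub_apply, ContinuousLinearMap.smul_apply,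
        ContinuousLinearMap.proj_apply, smul_eq_mul, S₁, S₂, S₃,
        Matrix.cons_val_zero, Matrix.cons_val_one, Matrix.head_cons,
        Matrix.cons_val_two, Matrix.tail_cons, Matrix.cons_val_three,
        Matrix.cons_val_four, hbr, htrA, htrB]
      ring
    | 3 =>
      simp only [Pi.sub_apply, Pi.add_apply, Pi.smul_apply, Dm, pr,
        ContinuousLinearMap.pi_apply, ContinuousLinearMap.add_apply,
        ContinuousLinearMap.sub_apply, ContinuousLinearMap.smul_apply,
        ContinuousLinearMap.proj_apply, smul_eq_mul, S₁, S₂, S₃,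
        Matrix.cons_val_zero, Matrix.cons_val_one, Matrix.head_cons,
        Matrix.cons_val_two, Matrix.tail_cons, Matrix.cons_val_three,
        Matrix.cons_val_four, hbr, htrA, htrB]
      ring
    | 4 =>
      simp only [Pi.sub_apply, Pi.add_apply, Pi.smul_apply, Dm, pr,
        ContinuousLinearMap.pi_apply, ContinuousLinearMap.add_apply,
        ContinuousLinearMap.sub_apply, ContinuousLinearMap.smul_apply,
        ContinuousLinearMap.proj_apply, smul_eq_mul, S₁, S₂, S₃,
        Matrix.cons_val_zero, Matrix.cons_val_one, Matrix.head_cons,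
        Matrix.cons_val_two, Matrix.tail_cons, Matrix.cons_val_three,
        Matrix.cons_val_four, hbr, htrA, htrB]
      ring
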